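/- Let m,n∈ℕ₀ and suppose a_j<a_n for all 0≤j<n and a_j=a_n for all n≤j≤n+m. Then for any t>0, any 0≤k≤n and any 0≤i≤m, I_{n+m}(t;a_0,…,a_{n+m}) ≤ (t^i/i!)·I_{n+m−i−k}(t;a_k,…,a_{n+m−i})·∏_{j=1}^{k} 1/(a_n−a_{j−1}). -/

import Mathlib

open MeasureTheory Filter

/-- The function `I_n(t; a_0,…,a_n)` of the paper:
`I_n(t;a) = e^{t a_n} ∫_{ℝ₊^n} exp{Σ_{i<n} x_i(a_i−a_n)} 1{Σ_{i<n} x_i < t} dx`. -/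
noncomputable def Ifun (n : ℕ) (t : ℝ) (a : Fin (n+1) → ℝ) : ℝ :=
  Real.exp (t * a (Fin.last n)) *
    ∫ x : Fin n → ℝ,
      Set.indicator {y : Fin n → ℝ | (∀ i, 0 ≤ y i) ∧ (∑ i, y i) < t}
        (fun y => Real.exp (∑ i, y i * (a i.castSucc - a (Fin.last n)))) x

/-! With `c_j = a_j - a_{n+m} ≤ 0`, `I_{n+m}` is `e^{t a_n}` times the integral of `e^{⟨c, x⟩}`
over the simplex `{x ≥ 0, Σ x < t}`. Split the coordinates into the first `k`, the middle
`n+m-i-k` and the last `i`: the simplex lies in the product of the three smaller simplices and the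
integrand factorises. On the first block `c_j < 0`, and dropping the constraint `Σ x < t` leaves
`∫_0^∞ e^{c_j x} dx = 1/(-c_j)` per coordinate; on the middle block one recovers `I_{n+m-i-k}`;
on the last block `c_j = 0` and only the volume `t^i/i!` of the simplex remains. -/

open Real Set
open scoped ENNReal

def simplexLT (N : ℕ) (t : ℝ) : Set (Fin N → ℝ) := {y | (∀ i, 0 ≤ y i) ∧ ∑ i, y i < t}

namespace simplexLT

lemma measurableSet (N : ℕ) (t : ℝ) : MeasurableSet (simplexLT N t) := by
  unfold simplexLT; measurability

lemma eq_empty {N : ℕ} {t : ℝ} (ht : t ≤ 0) : simplexLT N t = ∅ :=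
  Set.eq_empty_of_forall_notMem fun _ hy =>
    (ht.trans (Finset.sum_nonneg fun i _ => hy.1 i)).not_gt hy.2

lemma append_mem_iff {p q : ℕ} {t : ℝ} {u : Fin p → ℝ} {v : Fin q → ℝ} :
    Fin.append u v ∈ simplexLT (p + q) t ↔
      (∀ j, 0 ≤ u j) ∧ (∀ j, 0 ≤ v j) ∧ ∑ j, u j + ∑ j, v j < t := by
  simp [simplexLT, Fin.forall_fin_add, Fin.sum_univ_add, and_assoc]

lemma cons_mem_iff {N : ℕ} {t x : ℝ} {z : Fin N → ℝ} :
    (Fin.cons x z : Fin (N + 1) → ℝ) ∈ simplexLT (N + 1) t ↔ 0 ≤ x ∧ z ∈ simplexLT N (t - x) := by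
  simp only [simplexLT, mem_ofPred_eq, Fin.forall_fin_succ, Fin.cons_zero, Fin.cons_succ,
    Fin.sum_cons]
  constructor
  · rintro ⟨⟨h1, h2⟩, h3⟩; exact ⟨h1, h2, by linarith⟩
  · rintro ⟨h1, h2, h3⟩; exact ⟨⟨h1, h2⟩, by linarith⟩

lemma mem_of_append_mem {p q : ℕ} {t : ℝ} {u : Fin p → ℝ} {v : Fin q → ℝ}
    (h : Fin.append u v ∈ simplexLT (p + q) t) : u ∈ simplexLT p t ∧ v ∈ simplexLT q t := by
  obtain ⟨hu, hv, hsum⟩ := append_mem_iff.1 h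
  have hu0 : 0 ≤ ∑ j, u j := Finset.sum_nonneg fun j _ => hu j
  have hv0 : 0 ≤ ∑ j, v j := Finset.sum_nonneg fun j _ => hv j
  exact ⟨⟨hu, by linarith⟩, ⟨hv, by linarith⟩⟩

end simplexLT

lemma integral_Ico_sub_pow_div_factorial (N : ℕ) {t : ℝ} (ht : 0 ≤ t) :
    ∫ x in Ico 0 t, (t - x) ^ N / N.factorial = t ^ (N + 1) / (N + 1).factorial := by
  rw [integral_Ico_eq_integral_Ioo, ← integral_Ioc_eq_integral_Ioo,
    ← intervalIntegral.integral_of_le ht, intervalIntegral.integral_div,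
    intervalIntegral.integral_comp_sub_left (fun x => x ^ N), sub_self, sub_zero, integral_pow,
    Nat.factorial_succ]
  push_cast
  field_simp
  ring

lemma volume_simplexLT_succ (N : ℕ) (t : ℝ) :
    volume (simplexLT (N + 1) t) =
      ∫⁻ x in Ico 0 t, volume (simplexLT N (t - x)) := by
  have e := (volume_preserving_piFinSuccAbove (fun _ : Fin (N + 1) => ℝ) 0).symm
  rw [← e.measure_preimage (simplexLT.measurableSet _ t).nullMeasurableSet,
    Measure.volume_eq_prod, Measure.prod_apply (e.measurable (simplexLT.measurableSet _ t)),
    ← lintegral_indicator measurableSet_Ico]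
  congr 1 with x
  have hsec : Prod.mk x ⁻¹' (⇑(MeasurableEquiv.piFinSuccAbove (fun _ => ℝ) 0).symm ⁻¹'
      simplexLT (N + 1) t) = {z | 0 ≤ x ∧ z ∈ simplexLT N (t - x)} := by
    ext z
    simp [MeasurableEquiv.piFinSuccAbove_symm_apply, Fin.insertNthEquiv, simplexLT.cons_mem_iff]
  rw [hsec]
  by_cases hx : x ∈ Ico 0 t
  · simp [hx.1, indicator_of_mem hx]
  · rw [indicator_of_notMem hx]
    rcases lt_or_ge x 0 with hx0 | hx0
    · simp [hx0.not_ge]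
    · simp [hx0, simplexLT.eq_empty (show t - x ≤ 0 by simp_all)]

lemma volume_simplexLT (N : ℕ) {t : ℝ} (ht : 0 < t) :
    volume (simplexLT N t) = ENNReal.ofReal (t ^ N / N.factorial) := by
  induction N generalizing t with
  | zero =>
    have : simplexLT 0 t = univ := by ext y; simp [simplexLT, ht]
    simp [this, volume_pi]
  | succ N ih =>
    rw [volume_simplexLT_succ, setLIntegral_congr_fun measurableSet_Ico
      (fun x hx => ih (sub_pos.2 hx.2)), ← ofReal_integral_eq_lintegral_ofReal,
      integral_Ico_sub_pow_div_factorial N ht.le]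
    · exact (Continuous.integrableOn_Icc (by fun_prop)).mono_set Ico_subset_Icc_self
    · exact (ae_restrict_iff' measurableSet_Ico).2 (ae_of_all _ fun x hx =>
        div_nonneg (pow_nonneg (sub_nonneg.2 hx.2.le) N) (Nat.cast_nonneg _))

lemma measurePreserving_finAppend {α : Type*} [MeasureSpace α] [SigmaFinite (volume : Measure α)]
    (p q : ℕ) :
    MeasurePreserving (fun z : (Fin p → α) × (Fin q → α) => Fin.append z.1 z.2) volume volume := by
  have h1 := volume_measurePreserving_sumPiEquivProdPi_symm (fun _ : Fin p ⊕ Fin q => α)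
  have h2 := volume_measurePreserving_piCongrLeft (fun _ : Fin (p + q) => α) finSumFinEquiv
  convert h2.comp h1 using 1
  funext z
  ext i
  refine Fin.addCases (fun j => ?_) (fun j => ?_) i
  · rw [Fin.append_left, ← finSumFinEquiv_apply_left, MeasurableEquiv.coe_piCongrLeft,
      Function.comp_apply, Equiv.piCongrLeft_apply_apply]
    rfl
  · rw [Fin.append_right, ← finSumFinEquiv_apply_right, MeasurableEquiv.coe_piCongrLeft,
      Function.comp_apply, Equiv.piCongrLeft_apply_apply]
    rfl

noncomputable def simplexExpIntegral (N : ℕ) (t : ℝ) (c : Fin N → ℝ) : ℝ≥0∞ :=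
  ∫⁻ x in simplexLT N t, ENNReal.ofReal (exp (∑ i, x i * c i))

lemma measurable_indicator_simplexLT_exp (N : ℕ) (t : ℝ) (c : Fin N → ℝ) :
    Measurable ((simplexLT N t).indicator fun x => ENNReal.ofReal (exp (∑ i, x i * c i))) :=
  (Measurable.ennreal_ofReal (by fun_prop)).indicator (simplexLT.measurableSet N t)

lemma simplexExpIntegral_eq_lintegral (N : ℕ) (t : ℝ) (c : Fin N → ℝ) :
    simplexExpIntegral N t c =
      ∫⁻ x, (simplexLT N t).indicator (fun x => ENNReal.ofReal (exp (∑ i, x i * c i))) x :=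
  (lintegral_indicator (simplexLT.measurableSet N t) _).symm

lemma simplexExpIntegral_add_le (p q : ℕ) (t : ℝ) (c : Fin (p + q) → ℝ) :
    simplexExpIntegral (p + q) t c ≤
      simplexExpIntegral p t (fun j => c (Fin.castAdd q j)) *
        simplexExpIntegral q t (fun j => c (Fin.natAdd p j)) := by
  simp only [simplexExpIntegral_eq_lintegral]
  rw [← (measurePreserving_finAppend p q).lintegral_comp
    (measurable_indicator_simplexLT_exp _ t c), Measure.volume_eq_prod,
    ← lintegral_prod_mul (measurable_indicator_simplexLT_exp _ t _).aemeasurable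
      (measurable_indicator_simplexLT_exp _ t _).aemeasurable]
  refine lintegral_mono fun ⟨u, v⟩ => ?_
  by_cases h : Fin.append u v ∈ simplexLT (p + q) t
  · obtain ⟨hu, hv⟩ := simplexLT.mem_of_append_mem h
    simp only [indicator_of_mem h, indicator_of_mem hu, indicator_of_mem hv, Fin.sum_univ_add,
      Fin.append_left, Fin.append_right, exp_add, ENNReal.ofReal_mul (exp_pos _).le, le_refl]
  · simp [indicator_of_notMem h]

lemma simplexExpIntegral_le_volume {N : ℕ} {t : ℝ} {c : Fin N → ℝ} (hc : ∀ j, c j ≤ 0) :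
    simplexExpIntegral N t c ≤ volume (simplexLT N t) := by
  rw [← setLIntegral_one]
  refine setLIntegral_mono measurable_const fun x hx => ?_
  rw [ENNReal.ofReal_le_one, exp_le_one_iff]
  exact Finset.sum_nonpos fun j _ => mul_nonpos_of_nonneg_of_nonpos (hx.1 j) (hc j)

lemma simplexExpIntegral_zero (N : ℕ) (t : ℝ) :
    simplexExpIntegral N t 0 = volume (simplexLT N t) := by
  simp [simplexExpIntegral]

lemma lintegral_Ici_exp_mul {c : ℝ} (hc : c < 0) :
    ∫⁻ x in Ici 0, ENNReal.ofReal (exp (x * c)) = ENNReal.ofReal (-c)⁻¹ := by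
  simp_rw [mul_comm _ c]
  rw [← restrict_Ioi_eq_restrict_Ici, ← ofReal_integral_eq_lintegral_ofReal
    (integrableOn_exp_mul_Ioi hc 0) (ae_of_all _ fun x => (exp_pos _).le),
    integral_exp_mul_Ioi hc 0]
  congr 1
  simp
  field_simp

lemma simplexExpIntegral_one_le {t : ℝ} {c : Fin 1 → ℝ} (hc : c 0 < 0) :
    simplexExpIntegral 1 t c ≤ ENNReal.ofReal (-c 0)⁻¹ :=
  calc simplexExpIntegral 1 t c
      = ∫⁻ x in simplexLT 1 t, ENNReal.ofReal (exp (x 0 * c 0)) := by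
        simp [simplexExpIntegral]
    _ ≤ ∫⁻ x in (fun x : Fin 1 → ℝ => x 0) ⁻¹' Ici 0, ENNReal.ofReal (exp (x 0 * c 0)) :=
        lintegral_mono_set fun x hx => hx.1 0
    _ = ∫⁻ y in Ici 0, ENNReal.ofReal (exp (y * c 0)) :=
        (volume_preserving_funUnique (Fin 1) ℝ).setLIntegral_comp_preimage_emb
          (MeasurableEquiv.funUnique (Fin 1) ℝ).measurableEmbedding
          (fun y => ENNReal.ofReal (exp (y * c 0))) (Ici 0)
    _ = ENNReal.ofReal (-c 0)⁻¹ := lintegral_Ici_exp_mul hc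

lemma simplexExpIntegral_le_prod {p : ℕ} {t : ℝ} {c : Fin p → ℝ} (hc : ∀ j, c j < 0) :
    simplexExpIntegral p t c ≤ ∏ j, ENNReal.ofReal (-c j)⁻¹ := by
  induction p with
  | zero =>
    refine (simplexExpIntegral_le_volume fun j => j.elim0).trans ?_
    simpa [volume_pi] using measure_mono (μ := volume) (subset_univ (simplexLT 0 t))
  | succ p ih =>
    calc simplexExpIntegral (p + 1) t c
        ≤ simplexExpIntegral p t _ * simplexExpIntegral 1 t _ :=
          simplexExpIntegral_add_le p 1 t c
      _ ≤ (∏ j : Fin p, ENNReal.ofReal (-c j.castSucc)⁻¹) * ENNReal.ofReal (-c (Fin.last p))⁻¹ :=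
        mul_le_mul' (ih fun j => hc _) (simplexExpIntegral_one_le (hc _))
      _ = ∏ j, ENNReal.ofReal (-c j)⁻¹ :=
        (Fin.prod_univ_castSucc fun j => ENNReal.ofReal (-c j)⁻¹).symm

lemma simplexExpIntegral_le_of_neg_of_eq_zero {p q s : ℕ} {t : ℝ} (ht : 0 < t)
    {c : Fin (p + q + s) → ℝ} (hneg : ∀ j : Fin p, c (Fin.castAdd s (Fin.castAdd q j)) < 0)
    (hzero : ∀ j : Fin s, c (Fin.natAdd (p + q) j) = 0) :
    simplexExpIntegral (p + q + s) t c ≤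
      (∏ j : Fin p, ENNReal.ofReal (-c (Fin.castAdd s (Fin.castAdd q j)))⁻¹) *
        simplexExpIntegral q t (fun j => c (Fin.castAdd s (Fin.natAdd p j))) *
          ENNReal.ofReal (t ^ s / s.factorial) := by
  have hlast : simplexExpIntegral s t (fun j => c (Fin.natAdd (p + q) j)) =
      ENNReal.ofReal (t ^ s / s.factorial) := by
    rw [funext hzero, ← Pi.zero_def, simplexExpIntegral_zero, volume_simplexLT s ht]
  calc simplexExpIntegral (p + q + s) t c
      ≤ simplexExpIntegral (p + q) t _ * simplexExpIntegral s t _ :=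
        simplexExpIntegral_add_le _ _ t c
    _ ≤ (simplexExpIntegral p t _ * simplexExpIntegral q t _) * _ := by
        gcongr; exact simplexExpIntegral_add_le _ _ t _
    _ ≤ _ := by
        rw [hlast]; gcongr; exact simplexExpIntegral_le_prod hneg

lemma Ifun_eq_exp_mul_toReal (N : ℕ) (t : ℝ) (a : Fin (N + 1) → ℝ) :
    Ifun N t a = exp (t * a (Fin.last N)) *
      (simplexExpIntegral N t fun i => a i.castSucc - a (Fin.last N)).toReal := by
  rw [Ifun]
  congr 1
  exact (integral_indicator (simplexLT.measurableSet N t)).trans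
    (integral_eq_lintegral_of_nonneg_ae (ae_of_all _ fun x => (exp_pos _).le)
      (by fun_prop : Continuous _).aestronglyMeasurable)

lemma toReal_simplexExpIntegral_le {p q s : ℕ} {t : ℝ} (ht : 0 < t) {c : Fin (p + q + s) → ℝ}
    (hneg : ∀ j : Fin p, c (Fin.castAdd s (Fin.castAdd q j)) < 0) (hnonpos : ∀ j, c j ≤ 0)
    (hzero : ∀ j : Fin s, c (Fin.natAdd (p + q) j) = 0) :
    (simplexExpIntegral (p + q + s) t c).toReal ≤
      (∏ j : Fin p, (-c (Fin.castAdd s (Fin.castAdd q j)))⁻¹) *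
        (simplexExpIntegral q t fun j => c (Fin.castAdd s (Fin.natAdd p j))).toReal *
          (t ^ s / s.factorial) := by
  have hmid : simplexExpIntegral q t (fun j => c (Fin.castAdd s (Fin.natAdd p j))) ≠ ⊤ :=
    ((simplexExpIntegral_le_volume fun j => hnonpos _).trans_lt
      (by simp [volume_simplexLT q ht])).ne
  refine (ENNReal.toReal_mono (ENNReal.mul_ne_top (ENNReal.mul_ne_top
    (ENNReal.prod_ne_top fun j _ => ENNReal.ofReal_ne_top) hmid) ENNReal.ofReal_ne_top)
    (simplexExpIntegral_le_of_neg_of_eq_zero ht hneg hzero)).trans_eq ?_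
  rw [ENNReal.toReal_mul, ENNReal.toReal_mul, ENNReal.toReal_prod,
    ENNReal.toReal_ofReal (by positivity)]
  congr 2
  exact Finset.prod_congr rfl fun j _ =>
    ENNReal.toReal_ofReal (inv_nonneg.2 (neg_nonneg.2 (hneg j).le))

theorem Ifun_le {N p q s : ℕ} (h : N = p + q + s) {t : ℝ} (ht : 0 < t) {a : Fin (N + 1) → ℝ}
    (hlt : ∀ j : Fin (N + 1), j.val < p → a j < a (Fin.last N))
    (hle : ∀ j, a j ≤ a (Fin.last N))
    (heq : ∀ j : Fin (N + 1), p + q ≤ j.val → a j = a (Fin.last N)) :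
    Ifun N t a ≤ t ^ s / s.factorial * Ifun q t (fun j => a ⟨p + j, by omega⟩) *
      ∏ j : Fin p, (a (Fin.last N) - a ⟨j, by omega⟩)⁻¹ := by
  subst h
  have hmid : a ⟨p + q, by omega⟩ = a (Fin.last _) := heq _ le_rfl
  rw [Ifun_eq_exp_mul_toReal, Ifun_eq_exp_mul_toReal]
  simp only [Fin.val_last, hmid]
  calc _ ≤ exp (t * a (Fin.last _)) * ((∏ j : Fin p, (-(a ⟨j, by omega⟩ - a (Fin.last _)))⁻¹) *
          (simplexExpIntegral q t fun i => a ⟨p + i, by omega⟩ - a (Fin.last _)).toReal *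
            (t ^ s / s.factorial)) := by
        gcongr
        exact toReal_simplexExpIntegral_le ht (fun j => sub_neg.2 (hlt _ j.isLt))
          (fun j => sub_nonpos.2 (hle _)) (fun j => sub_eq_zero.2 (heq _ (by simp)))
    _ = _ := by simp only [neg_sub, Fin.val_castSucc]; ring

/-- Lemma `L:comp`.  If `a_j < a_n` for `0 ≤ j < n` and `a_j = a_n` for
`n ≤ j ≤ n+m`, then for any `t > 0`, `0 ≤ k ≤ n` and `0 ≤ i ≤ m`,
`I_{n+m}(t;a_0,…,a_{n+m}) ≤ (t^i/i!)·I_{n+m−i−k}(t;a_k,…,a_{n+m−i})·∏_{j=1}^{k} (a_n−a_{j−1})⁻¹`. -/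
theorem statement10 (m n : ℕ) (t : ℝ) (ht : 0 < t) (a : Fin (n+m+1) → ℝ)
    (hlt : ∀ j : Fin (n+m+1), j.val < n → a j < a ⟨n, by omega⟩)
    (heq : ∀ j : Fin (n+m+1), n ≤ j.val → a j = a ⟨n, by omega⟩)
    (k i : ℕ) (hk : k ≤ n) (hi : i ≤ m) :
    Ifun (n+m) t a
      ≤ (t ^ i / (Nat.factorial i)) *
          Ifun (n+m-i-k) t (fun j => a ⟨k + j.val, by have := j.isLt; omega⟩) *
          ∏ j : Fin k, (a ⟨n, by omega⟩ - a ⟨j.val, by have := j.isLt; omega⟩)⁻¹ := by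
  have hlast : a (Fin.last (n + m)) = a ⟨n, by omega⟩ := heq _ (by simp)
  rw [← hlast] at hlt heq ⊢
  refine Ifun_le (p := k) (q := n + m - i - k) (s := i) (by omega) ht
    (fun j hj => hlt j (by omega)) (fun j => ?_) (fun j hj => heq j (by omega))
  rcases lt_or_ge j.val n with hj | hj
  · exact (hlt j hj).le
  · exact (heq j hj).le
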